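/- Let β ∈ ℝ^{m_k+1} minimize ‖(A q(x_k) − b) + Σ_{i=0}^{m_k} β_i ((A q(x_k) − b) − (A x_{k−i} − b))‖ over all β ∈ ℝ^{m_k+1} (the NGMRES least-squares problem), define x_{k+1} = q(x_k) + Σ_{i=0}^{m_k} β_i (q(x_k) − x_{k−i}) and r̄_{k+1} = A x_{k+1} − b. Then ⟨r̄_{k+1}, A P r̄_k⟩ = 0, and ⟨r̄_{k+1}, r̄_{k−j} − r̄_{k−i}⟩ = 0 for all indices 0 ≤ i, j ≤ m_k. -/

import Mathlib

/-!
The residual of `x_{k+1}` is affine in `β`: it equals `r + ∑ βᵢ vᵢ` with `r = A q(x_k) - b` and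
`vᵢ = r - r̄_{k-i}`. Since `β` solves the least-squares problem, this residual is orthogonal to
every `vᵢ` (first-order optimality along each coordinate direction). Both claims are such
orthogonality relations: `A P r̄_k = -v₀` because `A q(x) - b = (I - A P)(A x - b)`, and
`r̄_{k-j} - r̄_{k-i} = vᵢ - vⱼ`.
-/

open scoped RealInnerProductSpace

/-- Matrix-vector multiplication on Euclidean space. -/
noncomputable def mulV {n : ℕ} (M : Matrix (Fin n) (Fin n) ℝ)
    (v : EuclideanSpace ℝ (Fin n)) : EuclideanSpace ℝ (Fin n) :=
  Matrix.toEuclideanLin M v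

section LeastSquares

variable {E : Type*} [NormedAddCommGroup E] [InnerProductSpace ℝ E]

theorem real_inner_eq_zero_of_forall_norm_le_norm_add_smul {w v : E}
    (h : ∀ t : ℝ, ‖w‖ ≤ ‖w + t • v‖) : ⟪w, v⟫ = 0 := by
  -- `t ↦ ‖w + t • v‖² - ‖w‖²` is a nonnegative quadratic with no constant term, so its
  -- discriminant `4 ⟪w, v⟫²` is nonpositive
  have hquad : ∀ t : ℝ, 0 ≤ ‖v‖ ^ 2 * (t * t) + 2 * ⟪w, v⟫ * t + 0 := by
    intro t
    have hsq : ‖w‖ ^ 2 ≤ ‖w + t • v‖ ^ 2 := pow_le_pow_left₀ (norm_nonneg w) (h t) 2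
    rw [norm_add_sq_real, real_inner_smul_right, norm_smul, mul_pow, Real.norm_eq_abs,
      sq_abs] at hsq
    linarith
  have hdiscr := discrim_le_zero hquad
  rw [discrim] at hdiscr
  nlinarith [sq_nonneg ⟪w, v⟫]

theorem real_inner_add_sum_smul_eq_zero_of_forall_norm_le {ι : Type*} (s : Finset ι) (r : E)
    (v : ι → E) (β : ι → ℝ)
    (hmin : ∀ c : ι → ℝ, ‖r + ∑ i ∈ s, β i • v i‖ ≤ ‖r + ∑ i ∈ s, c i • v i‖)
    {j : ι} (hj : j ∈ s) : ⟪r + ∑ i ∈ s, β i • v i, v j⟫ = 0 := by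
  classical
  refine real_inner_eq_zero_of_forall_norm_le_norm_add_smul fun t => ?_
  have hsum : ∑ i ∈ s, (β i + if i = j then t else 0) • v i = ∑ i ∈ s, β i • v i + t • v j := by
    simp [add_smul, Finset.sum_add_distrib, ite_smul, hj]
  simpa only [hsum, add_assoc] using hmin fun i => β i + if i = j then t else 0

end LeastSquares

theorem LinearMap.map_add_sum_smul_sub_sub {R M N ι : Type*} [Ring R] [AddCommGroup M]
    [AddCommGroup N] [Module R M] [Module R N] (f : M →ₗ[R] N) (b : N) (y : M) (z : ι → M)
    (β : ι → R) (s : Finset ι) :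
    f (y + ∑ i ∈ s, β i • (y - z i)) - b =
      (f y - b) + ∑ i ∈ s, β i • ((f y - b) - (f (z i) - b)) := by
  simp only [map_add, map_sum, map_smul, map_sub, sub_sub_sub_cancel_right]
  abel

theorem mulV_mul {n : ℕ} (A B : Matrix (Fin n) (Fin n) ℝ) (v : EuclideanSpace ℝ (Fin n)) :
    mulV (A * B) v = mulV A (mulV B v) := by
  simp [mulV, Matrix.toLpLin_apply, Matrix.mulVec_mulVec]

theorem mulV_richardson_sub {n : ℕ} (A P : Matrix (Fin n) (Fin n) ℝ)
    (b y : EuclideanSpace ℝ (Fin n)) :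
    mulV A (y + mulV P (b - mulV A y)) - b = (mulV A y - b) - mulV (A * P) (mulV A y - b) := by
  rw [mulV_mul, ← neg_sub (mulV A y) b]
  simp only [mulV, map_add, map_neg]
  abel

theorem stmt_5_general {n : ℕ} (A P : Matrix (Fin n) (Fin n) ℝ)
    (b : EuclideanSpace ℝ (Fin n))
    (q rb : EuclideanSpace ℝ (Fin n) → EuclideanSpace ℝ (Fin n))
    (hq : ∀ y, q y = y + mulV P (b - mulV A y))
    (hrb : ∀ y, rb y = mulV A y - b)
    (k m : ℕ)
    (x : ℕ → EuclideanSpace ℝ (Fin n))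
    (β : ℕ → ℝ)
    (hopt : ∀ c : ℕ → ℝ,
      ‖(mulV A (q (x k)) - b) + ∑ i ∈ Finset.range (m + 1),
          β i • ((mulV A (q (x k)) - b) - (mulV A (x (k - i)) - b))‖ ≤
      ‖(mulV A (q (x k)) - b) + ∑ i ∈ Finset.range (m + 1),
          c i • ((mulV A (q (x k)) - b) - (mulV A (x (k - i)) - b))‖)
    (xk1 rk1 : EuclideanSpace ℝ (Fin n))
    (hx : xk1 = q (x k) + ∑ i ∈ Finset.range (m + 1), β i • (q (x k) - x (k - i)))
    (hrk1 : rk1 = mulV A xk1 - b) :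
    ⟪rk1, mulV (A * P) (rb (x k))⟫ = 0 ∧
    ∀ i j, i ≤ m → j ≤ m → ⟪rk1, rb (x (k - j)) - rb (x (k - i))⟫ = 0 := by
  set r := mulV A (q (x k)) - b with hr
  set v : ℕ → EuclideanSpace ℝ (Fin n) := fun i => r - (mulV A (x (k - i)) - b) with hv
  have hres : rk1 = r + ∑ i ∈ Finset.range (m + 1), β i • v i := by
    rw [hrk1, hx]
    exact (Matrix.toEuclideanLin A).map_add_sum_smul_sub_sub b _ _ β _
  have hperp : ∀ j ≤ m, ⟪rk1, v j⟫ = 0 := fun j hj => hres ▸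
    real_inner_add_sum_smul_eq_zero_of_forall_norm_le _ r v β hopt
      (Finset.mem_range.2 (Nat.lt_succ_of_le hj))
  refine ⟨?_, fun i j hi hj => ?_⟩
  · have hv0 : mulV (A * P) (rb (x k)) = -v 0 := by
      simp only [hv, hr, hq, hrb, mulV_richardson_sub, Nat.sub_zero]
      abel
    rw [hv0, inner_neg_right, hperp 0 m.zero_le, neg_zero]
  · have hdiff : rb (x (k - j)) - rb (x (k - i)) = v i - v j := by
      simp only [hv, hrb]
      abel
    rw [hdiff, inner_sub_right, hperp i hi, hperp j hj, sub_zero]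

/-- orthogonality properties of the NGMRES residual. -/
theorem stmt_5 {n : ℕ} (A P : Matrix (Fin n) (Fin n) ℝ)
    (hA : IsUnit A.det) (hP : IsUnit P.det)
    (b : EuclideanSpace ℝ (Fin n))
    (q rb : EuclideanSpace ℝ (Fin n) → EuclideanSpace ℝ (Fin n))
    (hq : ∀ y, q y = y + mulV P (b - mulV A y))
    (hrb : ∀ y, rb y = mulV A y - b)
    (k m : ℕ) (hm : m ≤ k)
    (x : ℕ → EuclideanSpace ℝ (Fin n))
    (β : ℕ → ℝ)
    (hopt : ∀ c : ℕ → ℝ,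
      ‖(mulV A (q (x k)) - b) + ∑ i ∈ Finset.range (m + 1),
          β i • ((mulV A (q (x k)) - b) - (mulV A (x (k - i)) - b))‖ ≤
      ‖(mulV A (q (x k)) - b) + ∑ i ∈ Finset.range (m + 1),
          c i • ((mulV A (q (x k)) - b) - (mulV A (x (k - i)) - b))‖)
    (xk1 rk1 : EuclideanSpace ℝ (Fin n))
    (hx : xk1 = q (x k) + ∑ i ∈ Finset.range (m + 1), β i • (q (x k) - x (k - i)))
    (hrk1 : rk1 = mulV A xk1 - b) :
    ⟪rk1, mulV (A * P) (rb (x k))⟫ = 0 ∧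
    ∀ i j, i ≤ m → j ≤ m → ⟪rk1, rb (x (k - j)) - rb (x (k - i))⟫ = 0 :=
  stmt_5_general A P b q rb hq hrb k m x β hopt xk1 rk1 hx hrk1
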